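/- arXiv:2312.03334 — 2 statements merged into one kernel-verified Lean document; each statement's English description precedes it below -/
import Mathlib

section
/- Let A be a connected graph, let A' be a tree, and let p : A → A' be a covering morphism. Then p is an isomorphism. -/
/-- A rooted directed multigraph. -/
structure RGraph where
  V : Type
  E : Type
  s : E → V
  t : E → V
  root : V

namespace RGraph

/-- `l` is a path: consecutive edges are composable. -/
def IsPath (A : RGraph) (l : List A.E) : Prop :=
  l.Chain' (fun e f => A.t e = A.s f)

/-- `l` is a path starting at the vertex `q`. -/
def PathFrom (A : RGraph) (q : A.V) (l : List A.E) : Prop :=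
  A.IsPath l ∧ ∀ e ∈ l.head?, A.s e = q

/-- The target of the path `l` started at `q` (equal to `q` for the empty path). -/
def pathTarget (A : RGraph) (q : A.V) (l : List A.E) : A.V :=
  l.foldl (fun _ e => A.t e) q

@[simp] lemma pathTarget_nil (A : RGraph) (q : A.V) : A.pathTarget q [] = q := rfl

@[simp] lemma pathTarget_cons (A : RGraph) (q : A.V) (a : A.E) (l : List A.E) :
    A.pathTarget q (a :: l) = A.pathTarget (A.t a) l := rfl

lemma pathTarget_append (A : RGraph) (q : A.V) (l l' : List A.E) :
    A.pathTarget q (l ++ l') = A.pathTarget (A.pathTarget q l) l' := by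
  simp [pathTarget]

@[simp] lemma pathTarget_append_single (A : RGraph) (q : A.V) (l : List A.E) (e : A.E) :
    A.pathTarget q (l ++ [e]) = A.t e := by
  rw [pathTarget_append]; rfl

lemma pathFrom_nil (A : RGraph) (q : A.V) : A.PathFrom q [] :=
  ⟨List.isChain_nil, by simp⟩

lemma pathTarget_getLast {A : RGraph} {q : A.V} {l : List A.E} {x : A.E}
    (hx : x ∈ l.getLast?) : A.pathTarget q l = A.t x := by
  induction l generalizing q with
  | nil => simp at hx
  | cons a l ih =>
    cases l with
    | nil => simp at hx; subst hx; rfl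
    | cons b l =>
      rw [List.getLast?_cons_cons] at hx
      simpa using ih (q := A.t a) hx

lemma pathFrom_append_single {A : RGraph} {q : A.V} {l : List A.E} {e : A.E}
    (h : A.PathFrom q l) (he : A.s e = A.pathTarget q l) :
    A.PathFrom q (l ++ [e]) := by
  constructor
  · apply List.isChain_append.mpr
    refine ⟨h.1, List.isChain_singleton _, ?_⟩
    intro x hx y hy
    simp at hy
    subst hy
    rw [he]
    exact (pathTarget_getLast hx).symm
  · intro f hf
    cases l with
    | nil =>
      simp at hf
      subst hf
      simpa using he
    | cons a l =>
      simp at hf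
      subst hf
      exact h.2 a (by simp)

/-- `w` is reachable from `q` by an oriented path. -/
def Reach (A : RGraph) (q w : A.V) : Prop :=
  ∃ l, A.PathFrom q l ∧ A.pathTarget q l = w

lemma reach_self (A : RGraph) (q : A.V) : A.Reach q q :=
  ⟨[], A.pathFrom_nil q, rfl⟩

lemma reach_target {A : RGraph} {q : A.V} {e : A.E} (h : A.Reach q (A.s e)) :
    A.Reach q (A.t e) := by
  obtain ⟨l, hl, ht⟩ := h
  exact ⟨l ++ [e], pathFrom_append_single hl ht.symm, by simp⟩

/-- A graph is connected (as a rooted directed graph) if every vertex is reachable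
from the root. -/
def Connected (A : RGraph) : Prop := ∀ w : A.V, A.Reach A.root w

/-- A graph is a tree if the target map from paths emanating from the root to
vertices is a bijection. -/
def IsTree (A : RGraph) : Prop :=
  Function.Bijective
    (fun l : {l : List A.E // A.PathFrom A.root l} => A.pathTarget A.root l.1)

/-- A graph is locally finite if every vertex has finitely many outgoing edges. -/
def LocallyFinite (A : RGraph) : Prop := ∀ q : A.V, Finite {e : A.E // A.s e = q}

/-- Adjacency: there is an edge from `v` to `w`. -/
def Adj (A : RGraph) (v w : A.V) : Prop := ∃ e, A.s e = v ∧ A.t e = w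

/-- The induced rooted subgraph on all vertices reachable from `q` (the "cone" at `q`). -/
def subgraph (A : RGraph) (q : A.V) : RGraph where
  V := {w // A.Reach q w}
  E := {e // A.Reach q (A.s e)}
  s := fun e => ⟨A.s e.1, e.2⟩
  t := fun e => ⟨A.t e.1, reach_target e.2⟩
  root := ⟨q, A.reach_self q⟩

/-- The truncation of the cone at `v` to vertices at distance at most `d` from `v`. -/
def trunc (A : RGraph) (v : A.V) (d : ℕ) : RGraph where
  V := {w // ∃ l, A.PathFrom v l ∧ A.pathTarget v l = w ∧ l.length ≤ d}
  E := {e // ∃ l, A.PathFrom v l ∧ A.pathTarget v l = A.s e ∧ l.length < d}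
  s := fun e => ⟨A.s e.1, e.2.imp fun _ h => ⟨h.1, h.2.1, h.2.2.le⟩⟩
  t := fun e => ⟨A.t e.1, by
    obtain ⟨l, h1, h2, h3⟩ := e.2
    exact ⟨l ++ [e.1], pathFrom_append_single h1 h2.symm, by simp,
      by simp only [List.length_append, List.length_singleton]; omega⟩⟩
  root := ⟨v, [], A.pathFrom_nil v, rfl, Nat.zero_le d⟩

/-- The universal covering tree of `A`: vertices are the paths emanating from the root. -/
def cover (A : RGraph) : RGraph where
  V := {l : List A.E // A.PathFrom A.root l}
  E := {x : {l : List A.E // A.PathFrom A.root l} × A.E //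
          A.s x.2 = A.pathTarget A.root x.1.1}
  s := fun x => x.1.1
  t := fun x => ⟨x.1.1.1 ++ [x.1.2], pathFrom_append_single x.1.1.2 x.2⟩
  root := ⟨[], A.pathFrom_nil _⟩

end RGraph

/-- A morphism of rooted directed multigraphs. -/
structure GraphHom (A B : RGraph) where
  v : A.V → B.V
  e : A.E → B.E
  root_eq : v A.root = B.root
  s_eq : ∀ x, B.s (e x) = v (A.s x)
  t_eq : ∀ x, B.t (e x) = v (A.t x)

namespace GraphHom

variable {A B : RGraph}

/-- The unique path lifting property. -/
def UPLP (p : GraphHom A B) : Prop :=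
  ∀ (q : A.V) (l' : List B.E), B.PathFrom (p.v q) l' →
    ∃! l : List A.E, A.PathFrom q l ∧ l.map p.e = l'

/-- A covering morphism: surjective on vertices, with the unique path lifting property. -/
def IsCovering (p : GraphHom A B) : Prop := Function.Surjective p.v ∧ p.UPLP

/-- An isomorphism of graphs: bijective on vertices and on edges. -/
def IsIso (p : GraphHom A B) : Prop := Function.Bijective p.v ∧ Function.Bijective p.e

/-- The restriction of the edge map to the edges emanating from `q`. -/
def outMap (p : GraphHom A B) (q : A.V) :
    {e : A.E // A.s e = q} → {e' : B.E // B.s e' = p.v q} :=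
  fun e => ⟨p.e e.1, by rw [p.s_eq, e.2]⟩

lemma isPath_map (p : GraphHom A B) {l : List A.E} (h : A.IsPath l) :
    B.IsPath (l.map p.e) := by
  show List.IsChain _ (l.map p.e)
  rw [List.isChain_map]
  exact List.IsChain.imp (fun a b hab => by rw [p.t_eq, p.s_eq, hab]) h

lemma pathFrom_map (p : GraphHom A B) {q : A.V} {l : List A.E} (h : A.PathFrom q l) :
    B.PathFrom (p.v q) (l.map p.e) := by
  refine ⟨p.isPath_map h.1, ?_⟩
  intro f hf
  cases l with
  | nil => simp at hf
  | cons a l =>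
    simp at hf
    subst hf
    rw [p.s_eq, h.2 a (by simp)]

lemma pathTarget_map (p : GraphHom A B) (q : A.V) (l : List A.E) :
    B.pathTarget (p.v q) (l.map p.e) = p.v (A.pathTarget q l) := by
  induction l generalizing q with
  | nil => rfl
  | cons a l ih =>
    show B.pathTarget (B.t (p.e a)) (l.map p.e) = _
    rw [p.t_eq]
    exact ih (A.t a)

lemma reach_map (p : GraphHom A B) {q w : A.V} (h : A.Reach q w) :
    B.Reach (p.v q) (p.v w) := by
  obtain ⟨l, hl, ht⟩ := h
  exact ⟨l.map p.e, p.pathFrom_map hl, by rw [p.pathTarget_map, ht]⟩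

end GraphHom

/-- Two graphs are isomorphic. -/
def RGraph.Iso (A B : RGraph) : Prop := ∃ p : GraphHom A B, p.IsIso

/-- The universal covering morphism from the universal covering tree of `A` to `A`. -/
def RGraph.uCover (A : RGraph) : GraphHom A.cover A where
  v := fun l => A.pathTarget A.root l.1
  e := fun x => x.1.2
  root_eq := rfl
  s_eq := fun x => x.2
  t_eq := fun x => by
    show A.t x.1.2 = A.pathTarget A.root (x.1.1.1 ++ [x.1.2])
    simp

/-- The morphism induced between universal covering trees by a morphism of graphs. -/
def GraphHom.coverMap {A B : RGraph} (p : GraphHom A B) : GraphHom A.cover B.cover where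
  v := fun l => ⟨l.1.map p.e, by have := p.pathFrom_map l.2; rwa [p.root_eq] at this⟩
  e := fun x =>
    ⟨(⟨x.1.1.1.map p.e, by have := p.pathFrom_map x.1.1.2; rwa [p.root_eq] at this⟩,
      p.e x.1.2), by
        show B.s (p.e x.1.2) = B.pathTarget B.root (x.1.1.1.map p.e)
        rw [p.s_eq, x.2, ← p.root_eq, p.pathTarget_map]⟩
  root_eq := Subtype.ext rfl
  s_eq := fun _ => rfl
  t_eq := fun x => by
    apply Subtype.ext
    simp [RGraph.cover]

/-- `A` is a covering quotient of `T`. -/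
def IsCovQuotient (T A : RGraph) : Prop := ∃ p : GraphHom T A, p.IsCovering

/-- `A` is a minimal covering quotient of `T`: a covering quotient with the minimal
number of vertices among all covering quotients of `T`. -/
def IsMinCovQuotient (T A : RGraph) : Prop :=
  IsCovQuotient T A ∧
    ∀ B : RGraph, IsCovQuotient T B → Cardinal.mk A.V ≤ Cardinal.mk B.V

/-- `T` has finitely many cone types. -/
def FinManyCones (T : RGraph) : Prop :=
  ∃ S : Set T.V, S.Finite ∧ ∀ v : T.V, ∃ w ∈ S, RGraph.Iso (T.subgraph v) (T.subgraph w)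

/-- A self-similar tree: a locally finite tree with finitely many cone types. -/
def SelfSimilarTree (T : RGraph) : Prop := T.IsTree ∧ T.LocallyFinite ∧ FinManyCones T

namespace RGraph

/-- The automorphism group of a graph, realized as the group of root-preserving,
adjacency-preserving permutations of the vertex set (for trees this is the same as the
automorphism group in the sense of graph morphisms, since in a tree an edge is determined
by its endpoints). -/
def autGroup (T : RGraph) : Subgroup (Equiv.Perm T.V) where
  carrier := {g | g T.root = T.root ∧ ∀ v w, T.Adj v w ↔ T.Adj (g v) (g w)}
  one_mem' := ⟨rfl, fun _ _ => Iff.rfl⟩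
  mul_mem' := by
    rintro a b ⟨ha1, ha2⟩ ⟨hb1, hb2⟩
    refine ⟨?_, fun v w => ?_⟩
    · show a (b T.root) = T.root
      rw [hb1, ha1]
    · exact (hb2 v w).trans (ha2 (b v) (b w))
  inv_mem' := by
    rintro a ⟨ha1, ha2⟩
    refine ⟨?_, fun v w => ?_⟩
    · show a.symm T.root = T.root
      rw [Equiv.symm_apply_eq]
      exact ha1.symm
    · have h := ha2 (a⁻¹ v) (a⁻¹ w)
      simpa using h.symm

/-- The subgroup of permutations of the vertices fixing every vertex outside
of the cone at `v`. -/
def fixOutside (T : RGraph) (v : T.V) : Subgroup (Equiv.Perm T.V) where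
  carrier := {g | ∀ w, ¬ T.Reach v w → g w = w}
  one_mem' := fun _ _ => rfl
  mul_mem' := by
    intro a b ha hb w hw
    show a (b w) = w
    rw [hb w hw, ha w hw]
  inv_mem' := by
    intro a ha w hw
    show a.symm w = w
    rw [Equiv.symm_apply_eq]
    exact (ha w hw).symm

/-- The rigid stabilizer of the vertex `v`: automorphisms fixing every vertex
outside the subtree spanned by `v` and its descendants. -/
def rist (T : RGraph) (v : T.V) : Subgroup (Equiv.Perm T.V) :=
  T.autGroup ⊓ T.fixOutside v

/-- The set of vertices at distance `n` from the root. -/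
def level (T : RGraph) (n : ℕ) : Set T.V :=
  {v | ∃ l : List T.E, T.PathFrom T.root l ∧ T.pathTarget T.root l = v ∧ l.length = n}

/-- The `n`-th rigid level stabilizer: the subgroup generated by the rigid stabilizers
of the vertices at distance `n` from the root. -/
def ristLevel (T : RGraph) (n : ℕ) : Subgroup (Equiv.Perm T.V) :=
  ⨆ v ∈ T.level n, T.rist v

/-- The `n`-th rigid level stabilizer, as a subgroup of the automorphism group. -/
def ristIn (T : RGraph) (n : ℕ) : Subgroup ↥T.autGroup :=
  (T.ristLevel n).comap T.autGroup.subtype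

end RGraph

/-- A recurrent double edge: a pair of distinct parallel edges such that there is an
oriented loop which contains one of them, or from which their common source can be
reached. -/
def HasRecDoubleEdge (A : RGraph) : Prop :=
  ∃ e₁ e₂ : A.E, e₁ ≠ e₂ ∧ A.s e₁ = A.s e₂ ∧ A.t e₁ = A.t e₂ ∧
    ((∃ (q : A.V) (l : List A.E),
        A.PathFrom q l ∧ l ≠ [] ∧ A.pathTarget q l = q ∧ (e₁ ∈ l ∨ e₂ ∈ l)) ∨
     (∃ (q : A.V) (l : List A.E),
        A.PathFrom q l ∧ l ≠ [] ∧ A.pathTarget q l = q ∧ A.Reach q (A.s e₁)))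

/-- A deterministic finite automaton over the alphabet `A`, with a partial transition
function, a single initial state, and all states accepting. -/
structure PDFA (A : Type) where
  Q : Type
  finQ : Finite Q
  neQ : Nonempty Q
  δ : Q → A → Option Q
  init : Q

namespace PDFA

variable {A : Type} (M : PDFA A)

/-- Running the automaton from state `q` on a word; `none` if it gets stuck. -/
def run : M.Q → List A → Option M.Q
  | q, [] => some q
  | q, a :: w => (M.δ q a).bind fun q' => run q' w

/-- The regular language accepted by `M`. -/
def Lang : Set (List A) := {w | (M.run M.init w).isSome}

lemma run_append (q : M.Q) (u w : List A) :
    M.run q (u ++ w) = (M.run q u).bind fun q' => M.run q' w := by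
  induction u generalizing q with
  | nil => simp [run]
  | cons a u ih =>
    simp only [List.cons_append, run]
    cases M.δ q a with
    | none => simp
    | some q' => simp [ih]

lemma isSome_of_append {q : M.Q} {u w : List A}
    (h : (M.run q (u ++ w)).isSome) : (M.run q u).isSome := by
  rw [run_append] at h
  cases hu : M.run q u with
  | none => rw [hu] at h; simp at h
  | some q' => simp

/-- The path language tree of `M`: the tree whose vertices are the words of the
language of `M`, with an edge from `w` to `w ++ [a]` whenever both belong to the
language. -/
def pathTree : RGraph where
  V := {w : List A // (M.run M.init w).isSome}
  E := {x : List A × A // (M.run M.init (x.1 ++ [x.2])).isSome}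
  s := fun x => ⟨x.1.1, M.isSome_of_append x.2⟩
  t := fun x => ⟨x.1.1 ++ [x.1.2], x.2⟩
  root := ⟨[], by simp [run]⟩

/-- The underlying rooted directed multigraph of the automaton `M`. -/
def underlying : RGraph where
  V := M.Q
  E := {x : M.Q × A // (M.δ x.1 x.2).isSome}
  s := fun x => x.1.1
  t := fun x => (M.δ x.1.1 x.1.2).get x.2
  root := M.init

/-- `M` is geometrically minimal: it has the minimal number of states among all DFAs
(over arbitrary finite nonempty alphabets) whose path language trees are isomorphic,
as unlabelled rooted trees, to the path language tree of `M`. -/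
def GeomMinimal : Prop :=
  ∀ (B : Type), Finite B → Nonempty B → ∀ N : PDFA B,
    RGraph.Iso M.pathTree N.pathTree → Nat.card M.Q ≤ Nat.card N.Q

/-- The state reached after reading the word `w` of the language. -/
def qstate (w : List A) (h : (M.run M.init w).isSome) : M.Q :=
  (M.run M.init w).get h

/-- The group of admissible permutations at the state `q`: permutations `τ` of the
alphabet fixing the letters outside `Σ(q)` and satisfying `δ(q, τ a) = δ(q, a)`. -/
def SymQ (q : M.Q) : Subgroup (Equiv.Perm A) where
  carrier := {τ | ∀ a, M.δ q (τ a) = M.δ q a ∧ (M.δ q a = none → τ a = a)}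
  one_mem' := fun _ => ⟨rfl, fun _ => rfl⟩
  mul_mem' := by
    intro τ₁ τ₂ h1 h2 a
    constructor
    · show M.δ q (τ₁ (τ₂ a)) = M.δ q a
      rw [(h1 (τ₂ a)).1, (h2 a).1]
    · intro hn
      show τ₁ (τ₂ a) = a
      rw [(h2 a).2 hn, (h1 a).2 hn]
  inv_mem' := by
    intro τ h a
    have h1 := (h (τ.symm a)).1
    rw [Equiv.apply_symm_apply] at h1
    constructor
    · show M.δ q (τ.symm a) = M.δ q a
      exact h1.symm
    · intro hn
      have h2 := (h (τ.symm a)).2 (h1.symm.trans hn)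
      rw [Equiv.apply_symm_apply] at h2
      show τ.symm a = a
      exact h2.symm

end PDFA

/-- Extending a portrait to a map on words (the first argument is the accumulated
prefix): the `i`-th letter of the image word is the image of the `i`-th letter under
the local injection at the prefix of length `i - 1`. -/
def portraitExtend {A : Type} (σ : List A → A → A) : List A → List A → List A
  | _, [] => []
  | pre, a :: w => σ pre a :: portraitExtend σ (pre ++ [a]) w


lemma RGraph.pathFrom_singleton (A : RGraph) (e : A.E) : A.PathFrom (A.s e) [e] :=
  ⟨List.isChain_singleton _, by simp⟩

lemma RGraph.IsTree.connected {A : RGraph} (hA : A.IsTree) : A.Connected := fun w => by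
  obtain ⟨⟨l, hl⟩, hw⟩ := hA.2 w
  exact ⟨l, hl, hw⟩

namespace GraphHom

variable {A B : RGraph} {p : GraphHom A B}

lemma pathFrom_root_map (p : GraphHom A B) {l : List A.E} (h : A.PathFrom A.root l) :
    B.PathFrom B.root (l.map p.e) :=
  p.root_eq ▸ p.pathFrom_map h

lemma UPLP.map_injective {q : A.V} (hp : p.UPLP) {l₁ l₂ : List A.E}
    (h₁ : A.PathFrom q l₁) (h₂ : A.PathFrom q l₂) (h : l₁.map p.e = l₂.map p.e) :
    l₁ = l₂ :=
  (hp q _ (p.pathFrom_map h₁)).unique ⟨h₁, rfl⟩ ⟨h₂, h.symm⟩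

/-- Paths from the root to two vertices with the same image have images ending at the same
vertex of the tree `B`; so these images coincide, and by unique lifting so do the paths. -/
lemma UPLP.injective_v (hp : p.UPLP) (hA : A.Connected) (hB : B.IsTree) :
    Function.Injective p.v := by
  intro q₁ q₂ h
  obtain ⟨l₁, hl₁, rfl⟩ := hA q₁
  obtain ⟨l₂, hl₂, rfl⟩ := hA q₂
  have htarget : B.pathTarget B.root (l₁.map p.e) = B.pathTarget B.root (l₂.map p.e) := by
    simp only [← p.root_eq, p.pathTarget_map, h]
  have himage : l₁.map p.e = l₂.map p.e :=
    congrArg Subtype.val <| hB.1 (a₁ := ⟨_, p.pathFrom_root_map hl₁⟩)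
      (a₂ := ⟨_, p.pathFrom_root_map hl₂⟩) htarget
  rw [hp.map_injective hl₁ hl₂ himage]

lemma UPLP.injective_e (hp : p.UPLP) (hv : Function.Injective p.v) :
    Function.Injective p.e := by
  intro e₁ e₂ h
  have hs : A.s e₂ = A.s e₁ := hv (by rw [← p.s_eq, ← p.s_eq, h])
  have hpath₂ : A.PathFrom (A.s e₁) [e₂] := hs ▸ A.pathFrom_singleton e₂
  simpa using hp.map_injective (A.pathFrom_singleton e₁) hpath₂ (by simp [h])

lemma UPLP.surjective_e (hp : p.UPLP) (hB : B.Connected) : Function.Surjective p.e := by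
  intro e'
  obtain ⟨l', hl', ht'⟩ := hB (B.s e')
  have hpath : B.PathFrom (p.v A.root) (l' ++ [e']) :=
    p.root_eq ▸ RGraph.pathFrom_append_single hl' ht'.symm
  obtain ⟨l, ⟨-, hl⟩, -⟩ := hp A.root _ hpath
  have hmem : e' ∈ l.map p.e := hl ▸ List.mem_append_right l' (List.mem_singleton_self e')
  obtain ⟨e, -, he⟩ := List.mem_map.mp hmem
  exact ⟨e, he⟩

end GraphHom

/-- If `A` is connected and `A'` is a tree, then any covering
morphism `p : A → A'` is an isomorphism. -/
theorem stmt3 {A B : RGraph} (hA : A.Connected) (hB : B.IsTree)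
    (p : GraphHom A B) (hp : p.IsCovering) :
    p.IsIso := by
  obtain ⟨hsurj, hlift⟩ := hp
  have hv := hlift.injective_v hA hB
  exact ⟨⟨hv, hsurj⟩, hlift.injective_e hv, hlift.surjective_e hB.connected⟩
end

section
/- Let T be a self-similar tree. Then the following are equivalent: (i) some covering quotient of T contains a recurrent double edge; (ii) a minimal covering quotient of T contains a recurrent double edge; (iii) Aut(T) is infinite; (iv) Aut(T) is uncountable. Consequently, the cardinality of Aut(T) is either finite or equal to the cardinality of the continuum. -/
/-!
A vertex with two children of the same cone type carries an automorphism exchanging the two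
cones, and an automorphism is determined by its action on any ball containing all such
vertices; hence `Aut(T)` is infinite exactly when there are infinitely many of them.

A minimal covering quotient identifies precisely the vertices of equal cone type, so a deep
such vertex maps to a double edge at the end of a path longer than the number of vertices,
i.e. behind a cycle. Conversely, a recurrent double edge of any covering quotient lifts, along
the paths winding ever more often around the cycle, to swaps supported at strictly increasing
depths. Their products over arbitrary subsets of `ℕ` converge to pairwise distinct
automorphisms, while a countable tree has at most continuum many.
-/

namespace RGraph

section Paths

variable {A : RGraph} {q : A.V} {e : A.E} {l l' : List A.E}

lemma pathFrom_cons : A.PathFrom q (e :: l) ↔ A.s e = q ∧ A.PathFrom (A.t e) l := by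
  constructor
  · rintro ⟨hc, hh⟩
    have hc2 := List.isChain_cons.mp hc
    exact ⟨hh e (by simp), hc2.2, fun f hf => (hc2.1 f hf).symm⟩
  · rintro ⟨he, hc, hh⟩
    exact ⟨List.isChain_cons.mpr ⟨fun f hf => (hh f hf).symm, hc⟩,
      fun f hf => Option.mem_some_iff.mp hf ▸ he⟩

lemma pathFrom_append :
    A.PathFrom q (l ++ l') ↔ A.PathFrom q l ∧ A.PathFrom (A.pathTarget q l) l' := by
  induction l generalizing q with
  | nil => simp [A.pathFrom_nil q]
  | cons e l ih => simp only [List.cons_append, pathFrom_cons, ih, pathTarget_cons, and_assoc]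

lemma pathFrom_singleton_s18 : A.PathFrom q [e] ↔ A.s e = q := by
  simp [pathFrom_cons, A.pathFrom_nil]

def ReachableFromCycle (A : RGraph) (x : A.V) : Prop :=
  ∃ (q : A.V) (c : List A.E), A.PathFrom q c ∧ c ≠ [] ∧ A.pathTarget q c = q ∧ A.Reach q x

lemma reachableFromCycle_source_of_mem (hc : A.PathFrom q l) (hcq : A.pathTarget q l = q)
    (he : e ∈ l) : A.ReachableFromCycle (A.s e) := by
  obtain ⟨l₁, l₂, rfl⟩ := List.append_of_mem he
  obtain ⟨hl₁, hse, hl₂⟩ : A.PathFrom q l₁ ∧ A.s e = A.pathTarget q l₁ ∧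
      A.PathFrom (A.t e) l₂ := by
    rw [pathFrom_append, pathFrom_cons] at hc
    exact ⟨hc.1, hc.2.1, hc.2.2⟩
  have hl₂q : A.pathTarget (A.t e) l₂ = q := by
    rwa [pathTarget_append, pathTarget_cons] at hcq
  -- rotate the cycle so that it starts with `e`
  refine ⟨A.s e, e :: (l₂ ++ l₁), ?_, List.cons_ne_nil _ _, ?_, A.reach_self _⟩
  · exact pathFrom_cons.mpr ⟨rfl, pathFrom_append.mpr ⟨hl₂, hl₂q ▸ hl₁⟩⟩
  · rw [pathTarget_cons, pathTarget_append, hl₂q, hse]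

lemma hasRecDoubleEdge_iff : HasRecDoubleEdge A ↔ ∃ e₁ e₂ : A.E, e₁ ≠ e₂ ∧
    A.s e₁ = A.s e₂ ∧ A.t e₁ = A.t e₂ ∧ A.ReachableFromCycle (A.s e₁) := by
  refine ⟨?_, fun ⟨e₁, e₂, hne, hs, ht, hcyc⟩ => ⟨e₁, e₂, hne, hs, ht, Or.inr hcyc⟩⟩
  rintro ⟨e₁, e₂, hne, hs, ht, ⟨q, c, hc, -, hcq, he₁ | he₂⟩ | hcyc⟩
  · exact ⟨e₁, e₂, hne, hs, ht, reachableFromCycle_source_of_mem hc hcq he₁⟩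
  · exact ⟨e₁, e₂, hne, hs, ht, hs ▸ reachableFromCycle_source_of_mem hc hcq he₂⟩
  · exact ⟨e₁, e₂, hne, hs, ht, hcyc⟩

/-- Winding around the cycle `k` times before walking to `x`. -/
lemma ReachableFromCycle.exists_paths {x : A.V} (h : A.ReachableFromCycle x) :
    ∃ (q : A.V) (L : ℕ → List A.E), StrictMono (fun k => (L k).length) ∧
      ∀ k, A.PathFrom q (L k) ∧ A.pathTarget q (L k) = x := by
  obtain ⟨q, c, hc, hcne, hcq, π, hπ, hπx⟩ := h
  have hpow : ∀ k, A.PathFrom q (List.replicate k c).flatten ∧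
      A.pathTarget q (List.replicate k c).flatten = q := by
    intro k
    induction k with
    | zero => exact ⟨A.pathFrom_nil q, rfl⟩
    | succ k ih =>
      rw [List.replicate_succ, List.flatten_cons, pathFrom_append, pathTarget_append, hcq]
      exact ⟨⟨hc, ih.1⟩, ih.2⟩
  refine ⟨q, fun k => (List.replicate k c).flatten ++ π, ?_, fun k => ?_⟩
  · have := List.length_pos_iff.mpr hcne
    refine strictMono_nat_of_lt_succ fun k => ?_
    simp only [List.length_append, List.length_flatten, List.map_replicate, List.sum_replicate,
      smul_eq_mul]
    nlinarith
  · rw [pathFrom_append, pathTarget_append, (hpow k).2]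
    exact ⟨⟨(hpow k).1, hπ⟩, hπx⟩

/-- Pigeonhole principle: two prefixes of a long enough path end at the same vertex. -/
lemma reachableFromCycle_of_card_le_length [Finite A.V] (hl : A.PathFrom q l)
    (hlen : Nat.card A.V ≤ l.length) : A.ReachableFromCycle (A.pathTarget q l) := by
  have hni : ¬ Function.Injective fun i : Fin (l.length + 1) => A.pathTarget q (l.take i) :=
    fun hinj => by simpa using (Nat.card_le_card_of_injective _ hinj).trans hlen
  obtain ⟨i, j, heq, hij⟩ := Function.not_injective_iff.mp hni
  wlog hlt : i < j generalizing i j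
  · exact this j i heq.symm hij.symm (lt_of_le_of_ne (not_lt.mp hlt) hij.symm)
  obtain ⟨n, hn⟩ : ∃ n, j.1 = i.1 + (n + 1) := ⟨j.1 - i.1 - 1, by omega⟩
  have hcyc : A.pathTarget (A.pathTarget q (l.take i)) ((l.drop i).take (n + 1)) =
      A.pathTarget q (l.take i) := by
    rw [← pathTarget_append, ← List.take_add, ← hn, heq]
  rw [← List.take_append_drop i l, pathFrom_append] at hl
  rw [← List.take_append_drop i l, pathTarget_append]
  refine ⟨_, _, ?_, ?_, hcyc, l.drop i, hl.2, rfl⟩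
  · rw [← List.take_append_drop (n + 1) (l.drop i), pathFrom_append] at hl
    exact hl.2.1
  · simp only [ne_eq, List.take_eq_nil_iff, Nat.add_one_ne_zero, List.drop_eq_nil_iff,
      false_or, not_le]
    omega

end Paths

section Tree

variable {T : RGraph} (hT : T.IsTree)

noncomputable def rootPath (v : T.V) : {l : List T.E // T.PathFrom T.root l} :=
  (Equiv.ofBijective _ hT).symm v

variable {hT}

@[simp] lemma pathTarget_rootPath (v : T.V) : T.pathTarget T.root (rootPath hT v).1 = v :=
  (Equiv.ofBijective _ hT).apply_symm_apply v

lemma rootPath_pathTarget_root {l : List T.E} (hl : T.PathFrom T.root l) :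
    (rootPath hT (T.pathTarget T.root l)).1 = l :=
  congrArg Subtype.val ((Equiv.ofBijective _ hT).symm_apply_apply ⟨l, hl⟩)

lemma rootPath_injective : Function.Injective fun v => (rootPath hT v).1 := fun v w h => by
  rw [← pathTarget_rootPath (hT := hT) v, ← pathTarget_rootPath (hT := hT) w]
  exact congrArg _ h

lemma rootPath_pathTarget {v : T.V} {l : List T.E} (hl : T.PathFrom v l) :
    (rootPath hT (T.pathTarget v l)).1 = (rootPath hT v).1 ++ l := by
  have hp : T.PathFrom T.root ((rootPath hT v).1 ++ l) :=
    pathFrom_append.mpr ⟨(rootPath hT v).2, by rwa [pathTarget_rootPath]⟩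
  rw [← rootPath_pathTarget_root hp, pathTarget_append, pathTarget_rootPath]

@[simp] lemma rootPath_root : (rootPath hT T.root).1 = [] :=
  rootPath_pathTarget_root (T.pathFrom_nil _)

lemma rootPath_t (e : T.E) : (rootPath hT (T.t e)).1 = (rootPath hT (T.s e)).1 ++ [e] := by
  simpa using rootPath_pathTarget (hT := hT) (pathFrom_singleton_s18.mpr rfl)

lemma eq_of_t_eq (hT : T.IsTree) {e f : T.E} (h : T.t e = T.t f) : e = f := by
  have := rootPath_t (hT := hT) f
  rw [← h, rootPath_t] at this
  simpa using (List.append_inj' this rfl).2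

lemma pathFrom_unique (hT : T.IsTree) {v : T.V} {l l' : List T.E} (hl : T.PathFrom v l)
    (hl' : T.PathFrom v l')
    (h : T.pathTarget v l = T.pathTarget v l') : l = l' := by
  have := congrArg (fun w => (rootPath hT w).1) h
  simp only [rootPath_pathTarget hl, rootPath_pathTarget hl'] at this
  exact List.append_cancel_left this

lemma reach_iff_prefix {u x : T.V} :
    T.Reach u x ↔ (rootPath hT u).1 <+: (rootPath hT x).1 := by
  constructor
  · rintro ⟨l, hl, rfl⟩
    exact ⟨l, (rootPath_pathTarget hl).symm⟩
  · rintro ⟨l, hl⟩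
    have hpath : T.PathFrom u l := by
      have := (rootPath hT x).2
      rw [← hl, pathFrom_append, pathTarget_rootPath] at this
      exact this.2
    refine ⟨l, hpath, rootPath_injective (hT := hT) ?_⟩
    simp only [rootPath_pathTarget hpath, hl]

lemma reach_t_iff (hT : T.IsTree) {u : T.V} {e : T.E} :
    T.Reach u (T.t e) ↔ T.t e = u ∨ T.Reach u (T.s e) := by
  refine ⟨fun h => ?_, fun h => h.elim (fun h => h ▸ T.reach_self u) reach_target⟩
  rw [reach_iff_prefix (hT := hT), rootPath_t, List.prefix_concat_iff] at h
  rcases h with h | h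
  · exact Or.inl (rootPath_injective (hT := hT) (by simp only [rootPath_t, h]))
  · exact Or.inr (reach_iff_prefix.mpr h)

variable (hT) in
noncomputable def depth (v : T.V) : ℕ := (rootPath hT v).1.length

lemma depth_pathTarget_root {l : List T.E} (hl : T.PathFrom T.root l) :
    depth hT (T.pathTarget T.root l) = l.length :=
  congrArg List.length (rootPath_pathTarget_root hl)

lemma depth_root : depth hT T.root = 0 :=
  congrArg List.length rootPath_root

lemma depth_t (e : T.E) : depth hT (T.t e) = depth hT (T.s e) + 1 := by
  simp [depth, rootPath_t e]

lemma depth_le_of_reach {u x : T.V} (h : T.Reach u x) : depth hT u ≤ depth hT x :=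
  (reach_iff_prefix.mp h).length_le

end Tree

section LocallyFinite

variable {T : RGraph}

lemma finite_setOf_pathFrom_length (hLF : T.LocallyFinite) (n : ℕ) (q : T.V) :
    {l : List T.E | T.PathFrom q l ∧ l.length = n}.Finite := by
  induction n generalizing q with
  | zero => exact (Set.finite_singleton []).subset fun l hl => List.length_eq_zero_iff.mp hl.2
  | succ n ih =>
    have := hLF q
    refine (Set.finite_iUnion fun e : {e : T.E // T.s e = q} =>
      (ih (T.t e.1)).image (List.cons e.1)).subset ?_
    rintro (_ | ⟨e, l⟩) ⟨hl, hlen⟩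
    · simp at hlen
    · rw [pathFrom_cons] at hl
      exact Set.mem_iUnion.mpr ⟨⟨e, hl.1⟩, l, ⟨hl.2, by simpa using hlen⟩, rfl⟩

lemma finite_setOf_depth_le (hT : T.IsTree) (hLF : T.LocallyFinite) (N : ℕ) :
    {v : T.V | depth hT v ≤ N}.Finite := by
  refine (Set.finite_iUnion fun n : Fin (N + 1) =>
    (finite_setOf_pathFrom_length hLF n T.root).image (T.pathTarget T.root)).subset ?_
  intro v hv
  exact Set.mem_iUnion.mpr ⟨⟨depth hT v, Nat.lt_succ_of_le hv⟩, (rootPath hT v).1,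
    ⟨(rootPath hT v).2, rfl⟩, pathTarget_rootPath v⟩

lemma exists_mem_le_depth_of_infinite (hT : T.IsTree) (hLF : T.LocallyFinite) {S : Set T.V}
    (hS : S.Infinite) (N : ℕ) : ∃ v ∈ S, N ≤ depth hT v := by
  by_contra! h
  exact hS ((finite_setOf_depth_le hT hLF N).subset fun v hv => (h v hv).le)

lemma countable_V (hT : T.IsTree) (hLF : T.LocallyFinite) : Countable T.V :=
  Set.countable_univ_iff.mp <| (Set.countable_iUnion fun N =>
    (finite_setOf_depth_le hT hLF N).countable).mono fun v _ =>
      Set.mem_iUnion.mpr ⟨depth hT v, le_refl (depth hT v)⟩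

end LocallyFinite

section ConeEquiv

abbrev Paths (A : RGraph) (a : A.V) := {l : List A.E // A.PathFrom a l}

variable {A B C : RGraph} {a : A.V} {b : B.V} {c : C.V}

def Coherent (F : Paths A a → Paths B b) : Prop :=
  ∀ (l : List A.E) (hl : A.PathFrom a l) (e : A.E) (h : A.PathFrom a (l ++ [e])),
    ∃ e', (F ⟨l ++ [e], h⟩).1 = (F ⟨l, hl⟩).1 ++ [e']

/-- Cone types, encoded through path sets: for trees, a coherent bijection between the paths
leaving `a` and those leaving `b` amounts to an isomorphism of the subtrees spanned by `a` and
by `b`. -/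
def ConeEquiv (A : RGraph) (a : A.V) (B : RGraph) (b : B.V) : Prop :=
  ∃ F : Paths A a ≃ Paths B b, Coherent ⇑F

namespace Coherent

lemma length_apply_eq_add {F : Paths A a → Paths B b} (hF : Coherent F) (l : Paths A a) :
    (F l).1.length = (F ⟨[], A.pathFrom_nil a⟩).1.length + l.1.length := by
  obtain ⟨l, hl⟩ := l
  induction l using List.reverseRecOn with
  | nil => simp
  | append_singleton m e ih =>
    have hm : A.PathFrom a m := (pathFrom_append.mp hl).1
    obtain ⟨e', he'⟩ := hF m hm e hl
    simp only [he', List.length_append, List.length_singleton, ih hm]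
    omega

lemma apply_nil {F : Paths A a ≃ Paths B b} (hF : Coherent ⇑F) :
    (F ⟨[], A.pathFrom_nil a⟩).1 = [] := by
  have := hF.length_apply_eq_add (F.symm ⟨[], B.pathFrom_nil b⟩)
  rw [Equiv.apply_symm_apply] at this
  exact List.length_eq_zero_iff.mp (by simp only [List.length_nil] at this; omega)

lemma length_apply {F : Paths A a ≃ Paths B b} (hF : Coherent ⇑F) (l : Paths A a) :
    (F l).1.length = l.1.length := by
  rw [hF.length_apply_eq_add, hF.apply_nil, List.length_nil, zero_add]

lemma prefix_apply {F : Paths A a → Paths B b} (hF : Coherent F) (m l : Paths A a)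
    (h : m.1 <+: l.1) : (F m).1 <+: (F l).1 := by
  obtain ⟨l, hl⟩ := l
  induction l using List.reverseRecOn with
  | nil => rw [show m = ⟨[], hl⟩ from Subtype.ext (List.prefix_nil.mp h)]
  | append_singleton l e ih =>
    have hl' : A.PathFrom a l := (pathFrom_append.mp hl).1
    obtain ⟨e', he'⟩ := hF l hl' e hl
    rcases List.prefix_concat_iff.mp h with h | h
    · rw [show m = ⟨l ++ [e], hl⟩ from Subtype.ext h]
    · rw [he']
      exact (ih hl' h).trans (List.prefix_append _ _)

lemma symm {F : Paths A a ≃ Paths B b} (hF : Coherent ⇑F) : Coherent ⇑F.symm := by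
  intro l hl e h
  set m := F.symm ⟨l ++ [e], h⟩
  have hFm : F m = ⟨l ++ [e], h⟩ := F.apply_symm_apply _
  rcases List.eq_nil_or_concat m.1 with h0 | ⟨m₀, f, hm⟩
  · have := hF.length_apply m
    simp [hFm, h0] at this
  rw [List.concat_eq_append] at hm
  have hm₀ : A.PathFrom a m₀ := (pathFrom_append.mp (hm ▸ m.2)).1
  obtain ⟨f', hf'⟩ := hF m₀ hm₀ f (hm ▸ m.2)
  rw [show (⟨m₀ ++ [f], hm ▸ m.2⟩ : Paths A a) = m from Subtype.ext hm.symm, hFm] at hf'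
  have hFm₀ : F ⟨m₀, hm₀⟩ = ⟨l, hl⟩ := Subtype.ext (List.append_inj' hf'.symm rfl).1
  exact ⟨f, by rw [← hFm₀, F.symm_apply_apply]; exact hm⟩

lemma comp {G : Paths B b → Paths C c} {F : Paths A a → Paths B b} (hG : Coherent G)
    (hF : Coherent F) : Coherent (G ∘ F) := by
  intro l hl e h
  obtain ⟨e₁, he₁⟩ := hF l hl e h
  have hp : B.PathFrom b ((F ⟨l, hl⟩).1 ++ [e₁]) := he₁ ▸ (F ⟨l ++ [e], h⟩).2
  obtain ⟨e₂, he₂⟩ := hG _ (F ⟨l, hl⟩).2 e₁ hp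
  exact ⟨e₂, by simp only [Function.comp_apply, show F ⟨l ++ [e], h⟩ = ⟨_, hp⟩ from
    Subtype.ext he₁, he₂]⟩

lemma of_map (f : A.E → B.E) (hf : ∀ l, A.PathFrom a l → B.PathFrom b (l.map f)) :
    Coherent fun l : Paths A a => (⟨l.1.map f, hf l.1 l.2⟩ : Paths B b) :=
  fun _ _ e _ => ⟨f e, List.map_append ..⟩

end Coherent

lemma ConeEquiv.refl (A : RGraph) (a : A.V) : ConeEquiv A a A a :=
  ⟨Equiv.refl _, fun _ _ e _ => ⟨e, rfl⟩⟩

lemma ConeEquiv.symm (h : ConeEquiv A a B b) : ConeEquiv B b A a :=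
  let ⟨F, hF⟩ := h; ⟨F.symm, hF.symm⟩

lemma ConeEquiv.trans (h₁ : ConeEquiv A a B b) (h₂ : ConeEquiv B b C c) : ConeEquiv A a C c :=
  let ⟨F, hF⟩ := h₁; let ⟨G, hG⟩ := h₂; ⟨F.trans G, hG.comp hF⟩

lemma ConeEquiv.of_existsUnique_map (f : A.E → B.E)
    (hf : ∀ l, A.PathFrom a l → B.PathFrom b (l.map f))
    (hlift : ∀ m, B.PathFrom b m → ∃! l, A.PathFrom a l ∧ l.map f = m) : ConeEquiv A a B b := by
  refine ⟨Equiv.ofBijective _ ⟨fun l l' h => ?_, fun m => ?_⟩, Coherent.of_map f hf⟩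
  · obtain ⟨_, _, huniq⟩ := hlift _ (hf l.1 l.2)
    exact Subtype.ext ((huniq l.1 ⟨l.2, rfl⟩).trans
      (huniq l'.1 ⟨l'.2, (congrArg Subtype.val h).symm⟩).symm)
  · obtain ⟨l, ⟨hl, hlm⟩, -⟩ := hlift m.1 m.2
    exact ⟨⟨l, hl⟩, Subtype.ext hlm⟩

def consEquiv {e : A.E} (he : A.s e = a) : Paths A (A.t e) ≃ {m : Paths A a // [e] <+: m.1} where
  toFun l := ⟨⟨e :: l.1, pathFrom_cons.mpr ⟨he, l.2⟩⟩, List.prefix_append [e] l.1⟩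
  invFun m := ⟨m.1.1.tail, by
    obtain ⟨r, hr⟩ := m.2
    have hm := m.1.2
    rw [← hr] at hm ⊢
    exact (pathFrom_cons.mp hm).2⟩
  left_inv _ := rfl
  right_inv m := by
    obtain ⟨r, hr⟩ := m.2
    exact Subtype.ext (Subtype.ext (by simp [← hr]))

lemma ConeEquiv.of_apply_singleton {F : Paths A a ≃ Paths B b} (hF : Coherent ⇑F) {e : A.E}
    {e' : B.E} (he : A.s e = a) (hFe : (F ⟨[e], pathFrom_singleton_s18.mpr he⟩).1 = [e']) :
    ConeEquiv A (A.t e) B (B.t e') := by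
  have he' : B.s e' = b := pathFrom_singleton_s18.mp (hFe ▸ (F ⟨[e], _⟩).2)
  have hFe' : (F.symm ⟨[e'], pathFrom_singleton_s18.mpr he'⟩).1 = [e] := by
    rw [show (⟨[e'], _⟩ : Paths B b) = F ⟨[e], _⟩ from Subtype.ext hFe.symm, F.symm_apply_apply]
  have hiff (m : Paths A a) : [e] <+: m.1 ↔ [e'] <+: (F m).1 := by
    refine ⟨fun h => hFe ▸ hF.prefix_apply ⟨[e], _⟩ m h, fun h => ?_⟩
    simpa [hFe'] using hF.symm.prefix_apply ⟨[e'], pathFrom_singleton_s18.mpr he'⟩ (F m) h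
  refine ⟨(consEquiv he).trans ((F.subtypeEquiv hiff).trans (consEquiv he').symm), ?_⟩
  intro l hl f h
  obtain ⟨f', hf'⟩ := hF (e :: l) (pathFrom_cons.mpr ⟨he, hl⟩) f (pathFrom_cons.mpr ⟨he, h⟩)
  have hne : (F ⟨e :: l, pathFrom_cons.mpr ⟨he, hl⟩⟩).1 ≠ [] := fun h0 => by
    simpa [h0] using hF.length_apply ⟨e :: l, pathFrom_cons.mpr ⟨he, hl⟩⟩
  refine ⟨f', ?_⟩
  change (F ⟨e :: l ++ [f], _⟩).1.tail = (F ⟨e :: l, _⟩).1.tail ++ [f']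
  rw [hf', List.tail_append_of_ne_nil hne]

def singletonEquiv (a : A.V) : {e : A.E // A.s e = a} ≃ {m : Paths A a // m.1.length = 1} where
  toFun e := ⟨⟨[e.1], pathFrom_singleton_s18.mpr e.2⟩, rfl⟩
  invFun m := ⟨m.1.1.head (List.ne_nil_of_length_eq_add_one m.2), by
    obtain ⟨⟨m, hm⟩, hlen⟩ := m
    obtain ⟨e, rfl⟩ := List.length_eq_one_iff.mp hlen
    exact pathFrom_singleton_s18.mp hm⟩
  left_inv _ := rfl
  right_inv := by
    rintro ⟨⟨m, hm⟩, hlen⟩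
    obtain ⟨e, rfl⟩ := List.length_eq_one_iff.mp hlen
    rfl

def Coherent.outEdgeEquiv {F : Paths A a ≃ Paths B b} (hF : Coherent ⇑F) :
    {e : A.E // A.s e = a} ≃ {e' : B.E // B.s e' = b} :=
  (singletonEquiv a).trans
    ((F.subtypeEquiv fun m => by rw [hF.length_apply]).trans (singletonEquiv b).symm)

lemma Coherent.apply_singleton {F : Paths A a ≃ Paths B b} (hF : Coherent ⇑F)
    (e : {e : A.E // A.s e = a}) :
    (F ⟨[e.1], pathFrom_singleton_s18.mpr e.2⟩).1 = [(hF.outEdgeEquiv e).1] := by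
  have := congrArg (fun m => m.1.1) ((singletonEquiv b).apply_symm_apply
    ⟨F ⟨[e.1], pathFrom_singleton_s18.mpr e.2⟩, by rw [hF.length_apply]; rfl⟩)
  exact this.symm

end ConeEquiv

section Automorphisms

variable {T : RGraph}

lemma reach_apply_of_mem_autGroup {g : Equiv.Perm T.V} (hg : g ∈ T.autGroup) {v x : T.V}
    (h : T.Reach v x) : T.Reach (g v) (g x) := by
  obtain ⟨l, hl, rfl⟩ := h
  induction l generalizing v with
  | nil => exact T.reach_self _
  | cons e l ih =>
    obtain ⟨rfl, hl_tail⟩ := pathFrom_cons.mp hl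
    obtain ⟨e', he', hte'⟩ := (hg.2 _ _).mp ⟨e, rfl, rfl⟩
    obtain ⟨l', hl', hl't⟩ := ih hl_tail
    exact ⟨e' :: l', pathFrom_cons.mpr ⟨he', hte' ▸ hl'⟩, by rw [pathTarget_cons, hte', hl't]; rfl⟩

lemma exists_pathsEquiv_of_mem_autGroup (hT : T.IsTree) {g : Equiv.Perm T.V}
    (hg : g ∈ T.autGroup) (v : T.V) : ∃ F : Paths T v ≃ Paths T (g v), Coherent ⇑F ∧
      ∀ l, T.pathTarget (g v) (F l).1 = g (T.pathTarget v l.1) := by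
  choose F hF hFt using fun l : Paths T v => reach_apply_of_mem_autGroup hg ⟨l.1, l.2, rfl⟩
  have hinj : Function.Injective fun l => (⟨F l, hF l⟩ : Paths T (g v)) := fun l l' h => by
    have := congrArg (fun m : Paths T (g v) => T.pathTarget (g v) m.1) h
    simp only [hFt, EmbeddingLike.apply_eq_iff_eq] at this
    exact Subtype.ext (pathFrom_unique hT l.2 l'.2 this)
  have hsurj : Function.Surjective fun l => (⟨F l, hF l⟩ : Paths T (g v)) := fun m => by
    obtain ⟨l, hl, hlt⟩ := reach_apply_of_mem_autGroup (inv_mem hg) ⟨m.1, m.2, rfl⟩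
    rw [show g⁻¹ (g v) = v from g.symm_apply_apply v] at hl hlt
    refine ⟨⟨l, hl⟩, Subtype.ext (pathFrom_unique hT (hF _) m.2 ?_)⟩
    rw [hFt, hlt]
    exact g.apply_symm_apply _
  refine ⟨Equiv.ofBijective _ ⟨hinj, hsurj⟩, fun l hl e h => ?_, hFt⟩
  have hse : T.s e = T.pathTarget v l := pathFrom_singleton_s18.mp (pathFrom_append.mp h).2
  obtain ⟨e', he', hte'⟩ := (hg.2 _ _).mp ⟨e, hse, rfl⟩
  refine ⟨e', ?_⟩
  change F ⟨l ++ [e], h⟩ = F ⟨l, hl⟩ ++ [e']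
  refine pathFrom_unique hT (hF _) (pathFrom_append_single (hF _) (by rw [he', hFt])) ?_
  rw [hFt, pathTarget_append_single, pathTarget_append_single, hte']

lemma ConeEquiv.of_mem_autGroup (hT : T.IsTree) {g : Equiv.Perm T.V} (hg : g ∈ T.autGroup)
    (v : T.V) : ConeEquiv T v T (g v) :=
  let ⟨F, hF, _⟩ := exists_pathsEquiv_of_mem_autGroup hT hg v; ⟨F, hF⟩

lemma depth_apply_of_mem_autGroup (hT : T.IsTree) {g : Equiv.Perm T.V} (hg : g ∈ T.autGroup)
    (x : T.V) : depth hT (g x) = depth hT x := by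
  obtain ⟨F, hF, hFt⟩ := exists_pathsEquiv_of_mem_autGroup hT hg T.root
  have hlt := hFt (rootPath hT x)
  have hl := (F (rootPath hT x)).2
  have hlen := hF.length_apply (rootPath hT x)
  generalize (F (rootPath hT x)).1 = l at hlt hl hlen
  rw [hg.1] at hl
  rw [hg.1, pathTarget_rootPath] at hlt
  rw [← hlt, depth_pathTarget_root hl, hlen]
  rfl

def HasTwinChildren (T : RGraph) (v : T.V) : Prop :=
  ∃ f₁ f₂ : T.E, f₁ ≠ f₂ ∧ T.s f₁ = v ∧ T.s f₂ = v ∧ ConeEquiv T (T.t f₁) T (T.t f₂)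

/-- Below the last vertex with twin children an automorphism has no choice left. -/
lemma eq_one_of_fixes_ball (hT : T.IsTree) {N : ℕ}
    (htwin : ∀ v, T.HasTwinChildren v → depth hT v < N) {f : Equiv.Perm T.V}
    (hf : f ∈ T.autGroup) (hfix : ∀ v, depth hT v ≤ N → f v = v) : f = 1 := by
  suffices h : ∀ l, T.PathFrom T.root l → f (T.pathTarget T.root l) = T.pathTarget T.root l from
    Equiv.ext fun v => by simpa using h _ (rootPath hT v).2
  intro l
  induction l using List.reverseRecOn with
  | nil => exact fun _ => hf.1
  | append_singleton l e ih =>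
    intro hle
    by_cases hlen : (l ++ [e]).length ≤ N
    · exact hfix _ (by rwa [depth_pathTarget_root hle])
    obtain ⟨hl, hse⟩ := pathFrom_append.mp hle
    rw [pathFrom_singleton_s18] at hse
    rw [pathTarget_append_single]
    obtain ⟨e', he', hte'⟩ := (hf.2 _ _).mp ⟨e, rfl, rfl⟩
    rw [hse, ih hl, ← hse] at he'
    by_contra hne
    refine (htwin (T.s e) ⟨e, e', fun h => hne (h ▸ hte'.symm), rfl, he', ?_⟩).not_ge ?_
    · exact hte' ▸ ConeEquiv.of_mem_autGroup hT hf (T.t e)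
    · rw [hse, depth_pathTarget_root hl]
      simp only [List.length_append, List.length_singleton] at hlen
      omega

lemma finite_autGroup (hT : T.IsTree) (hLF : T.LocallyFinite)
    (hfin : {v | T.HasTwinChildren v}.Finite) : Finite T.autGroup := by
  obtain ⟨N, hN⟩ := (hfin.image (depth hT)).bddAbove
  have hball := (finite_setOf_depth_le hT hLF (N + 1)).to_subtype
  let restrict (g : T.autGroup) (v : {v | depth hT v ≤ N + 1}) : {v | depth hT v ≤ N + 1} :=
    ⟨(g : Equiv.Perm T.V) v, by
      show depth hT _ ≤ N + 1
      rw [depth_apply_of_mem_autGroup hT g.2]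
      exact v.2⟩
  refine Finite.of_injective restrict fun g h hgh => Subtype.ext (inv_mul_eq_one.mp ?_)
  refine eq_one_of_fixes_ball hT (fun v hv => Nat.lt_succ_of_le (hN ⟨v, hv, rfl⟩))
    (mul_mem (inv_mem g.2) h.2) fun v hv => ?_
  rw [Equiv.Perm.mul_apply, Equiv.Perm.inv_eq_iff_eq]
  exact congrArg Subtype.val (congrFun hgh ⟨v, hv⟩).symm

end Automorphisms

section Swap

variable {T : RGraph}

open Classical in
noncomputable def swapCones (u u' : T.V) (F : Paths T u ≃ Paths T u') (x : T.V) : T.V :=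
  if h : T.Reach u x then T.pathTarget u' (F ⟨h.choose, h.choose_spec.1⟩).1
  else if h' : T.Reach u' x then T.pathTarget u (F.symm ⟨h'.choose, h'.choose_spec.1⟩).1
  else x

section

variable {u u' : T.V} (F : Paths T u ≃ Paths T u')

lemma swapCones_pathTarget (hT : T.IsTree) {l : List T.E} (hl : T.PathFrom u l) :
    swapCones u u' F (T.pathTarget u l) = T.pathTarget u' (F ⟨l, hl⟩).1 := by
  have h : T.Reach u (T.pathTarget u l) := ⟨l, hl, rfl⟩
  rw [swapCones, dif_pos h]
  rw [show (⟨h.choose, h.choose_spec.1⟩ : Paths T u) = ⟨l, hl⟩ from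
    Subtype.ext (pathFrom_unique hT h.choose_spec.1 hl h.choose_spec.2)]

lemma swapCones_symm (hdisj : ∀ x, T.Reach u x → ¬ T.Reach u' x) :
    swapCones u' u F.symm = swapCones u u' F := by
  ext x
  by_cases hx : T.Reach u x
  · simp [swapCones, hx, hdisj x hx]
  · simp [swapCones, hx]

lemma swapCones_of_not_reach {x : T.V} (hx : ¬ T.Reach u x) (hx' : ¬ T.Reach u' x) :
    swapCones u u' F x = x := by
  simp [swapCones, hx, hx']

lemma swapCones_involutive (hT : T.IsTree) (hdisj : ∀ x, T.Reach u x → ¬ T.Reach u' x) :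
    Function.Involutive (swapCones u u' F) := by
  intro x
  by_cases hx : T.Reach u x
  · obtain ⟨l, hl, rfl⟩ := hx
    rw [swapCones_pathTarget F hT hl, ← swapCones_symm F hdisj,
      swapCones_pathTarget F.symm hT (F ⟨l, hl⟩).2, Equiv.symm_apply_apply]
  by_cases hx' : T.Reach u' x
  · obtain ⟨l, hl, rfl⟩ := hx'
    rw [← swapCones_symm F hdisj, swapCones_pathTarget F.symm hT hl, swapCones_symm F hdisj,
      swapCones_pathTarget F hT (F.symm ⟨l, hl⟩).2, Equiv.apply_symm_apply]
  · rw [swapCones_of_not_reach F hx hx', swapCones_of_not_reach F hx hx']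

lemma adj_swapCones_of_reach (hT : T.IsTree) (hF : Coherent ⇑F) {e : T.E}
    (he : T.Reach u (T.s e)) : T.Adj (swapCones u u' F (T.s e)) (swapCones u u' F (T.t e)) := by
  obtain ⟨l, hl, hlt⟩ := he
  have hle : T.PathFrom u (l ++ [e]) := pathFrom_append_single hl hlt.symm
  obtain ⟨e', he'⟩ := hF l hl e hle
  have hpath := (F ⟨l ++ [e], hle⟩).2
  rw [he', pathFrom_append, pathFrom_singleton_s18] at hpath
  refine ⟨e', ?_, ?_⟩
  · rw [← hlt, swapCones_pathTarget F hT hl, hpath.2]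
  · rw [← pathTarget_append_single T u l e, swapCones_pathTarget F hT hle, he',
      pathTarget_append_single]

end

lemma not_reach_t_s (hT : T.IsTree) (f : T.E) : ¬ T.Reach (T.t f) (T.s f) := fun h => by
  simpa [depth_t] using depth_le_of_reach (hT := hT) h

lemma not_reach_of_reach_t_of_s_eq (hT : T.IsTree) {f₁ f₂ : T.E} (hne : f₁ ≠ f₂)
    (hs : T.s f₁ = T.s f₂) {x : T.V} (h₁ : T.Reach (T.t f₁) x) : ¬ T.Reach (T.t f₂) x := by
  intro h₂
  rw [reach_iff_prefix (hT := hT), rootPath_t] at h₁ h₂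
  rw [hs] at h₁
  have := List.prefix_of_prefix_length_le h₁ h₂ (by simp)
  exact hne (by simpa using (List.prefix_append_right_inj _).mp this)

lemma adj_swapCones_of_reach_t (hT : T.IsTree) {f₁ f₂ : T.E} (hs : T.s f₁ = T.s f₂)
    {F : Paths T (T.t f₁) ≃ Paths T (T.t f₂)} (hF : Coherent ⇑F) {e : T.E}
    (he : T.Reach (T.t f₁) (T.t e)) :
    T.Adj (swapCones (T.t f₁) (T.t f₂) F (T.s e)) (swapCones (T.t f₁) (T.t f₂) F (T.t e)) := by
  rcases (reach_t_iff hT).mp he with h | h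
  · obtain rfl := eq_of_t_eq hT h
    have hsf : swapCones (T.t e) (T.t f₂) F (T.s e) = T.s e :=
      swapCones_of_not_reach F (not_reach_t_s hT e) (hs ▸ not_reach_t_s hT f₂)
    have htf : swapCones (T.t e) (T.t f₂) F (T.t e) = T.t f₂ := by
      simpa [hF.apply_nil] using swapCones_pathTarget F hT (T.pathFrom_nil (T.t e))
    rw [hsf, htf]
    exact ⟨f₂, hs.symm, rfl⟩
  · exact adj_swapCones_of_reach F hT hF h

lemma exists_swap_mem_autGroup (hT : T.IsTree) {f₁ f₂ : T.E} (hne : f₁ ≠ f₂)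
    (hs : T.s f₁ = T.s f₂) (hce : ConeEquiv T (T.t f₁) T (T.t f₂)) :
    ∃ σ ∈ T.autGroup, σ (T.t f₁) = T.t f₂ ∧ ∀ x, σ x ≠ x → depth hT (T.s f₁) < depth hT x := by
  obtain ⟨F, hF⟩ := hce
  have hdisj := fun x => not_reach_of_reach_t_of_s_eq hT hne hs (x := x)
  have hinv := swapCones_involutive F hT hdisj
  have hmoved (x : T.V) (hx : swapCones _ _ F x ≠ x) : depth hT (T.s f₁) < depth hT x := by
    by_cases h₁ : T.Reach (T.t f₁) x
    · simpa [depth_t] using depth_le_of_reach (hT := hT) h₁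
    by_cases h₂ : T.Reach (T.t f₂) x
    · simpa [depth_t, hs] using depth_le_of_reach (hT := hT) h₂
    exact absurd (swapCones_of_not_reach F h₁ h₂) hx
  have hadj (e : T.E) : T.Adj (swapCones _ _ F (T.s e)) (swapCones _ _ F (T.t e)) := by
    by_cases h₁ : T.Reach (T.t f₁) (T.t e)
    · exact adj_swapCones_of_reach_t hT hs hF h₁
    by_cases h₂ : T.Reach (T.t f₂) (T.t e)
    · rw [← swapCones_symm F hdisj]
      exact adj_swapCones_of_reach_t hT hs.symm hF.symm h₂
    rw [swapCones_of_not_reach F h₁ h₂,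
      swapCones_of_not_reach F (fun h => h₁ (reach_target h)) (fun h => h₂ (reach_target h))]
    exact ⟨e, rfl, rfl⟩
  refine ⟨hinv.toPerm, ⟨?_, fun v w => ⟨?_, fun h => ?_⟩⟩, ?_, hmoved⟩
  · by_contra h
    simpa [depth_root] using hmoved _ h
  · rintro ⟨e, rfl, rfl⟩
    exact hadj e
  · obtain ⟨e, hse, hte⟩ := h
    have := hadj e
    rwa [hse, hte, Function.Involutive.coe_toPerm, hinv v, hinv w] at this
  · simpa [hF.apply_nil] using swapCones_pathTarget F hT (T.pathFrom_nil (T.t f₁))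

end Swap

end RGraph

section PartialProd

variable {α : Type*} (σ : ℕ → Equiv.Perm α) (S : Set ℕ)

open Classical in
noncomputable def partialProd (N : ℕ) : Equiv.Perm α :=
  ((List.range N).map fun n => if n ∈ S then σ n else 1).prod

open Classical in
lemma partialProd_succ (N : ℕ) :
    partialProd σ S (N + 1) = partialProd σ S N * if N ∈ S then σ N else 1 := by
  simp [partialProd, List.range_succ]

lemma partialProd_mem {H : Subgroup (Equiv.Perm α)} (hσ : ∀ n, σ n ∈ H) (N : ℕ) :
    partialProd σ S N ∈ H := by
  classical
  refine Subgroup.list_prod_mem _ fun g hg => ?_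
  obtain ⟨n, -, rfl⟩ := List.mem_map.mp hg
  split_ifs
  exacts [hσ n, one_mem H]

lemma partialProd_congr {S S' : Set ℕ} {N : ℕ} (h : ∀ n < N, n ∈ S ↔ n ∈ S') :
    partialProd σ S N = partialProd σ S' N := by
  unfold partialProd
  congr 1
  refine List.map_congr_left fun n hn => ?_
  have hn := h n (List.mem_range.mp hn)
  by_cases hS : n ∈ S
  · rw [if_pos hS, if_pos (hn.mp hS)]
  · rw [if_neg hS, if_neg (mt hn.mpr hS)]

lemma partialProd_apply_of_le {N M : ℕ} {x : α} (hNM : N ≤ M)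
    (hx : ∀ n, N ≤ n → n < M → σ n x = x) : partialProd σ S M x = partialProd σ S N x := by
  classical
  induction M, hNM using Nat.le_induction with
  | base => rfl
  | succ M hNM ih =>
    have hM : (if M ∈ S then σ M else 1) x = x := by
      split_ifs
      exacts [hx M hNM M.lt_succ_self, rfl]
    rw [partialProd_succ, Equiv.Perm.mul_apply, hM, ih fun n h₁ h₂ => hx n h₁ (by omega)]

end PartialProd

namespace RGraph

variable {T : RGraph}

lemma exists_mem_autGroup_eq_of_depth_le (hT : T.IsTree) (G : ℕ → Equiv.Perm T.V)
    (hG : ∀ n, G n ∈ T.autGroup)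
    (hstab : ∀ n m x, n ≤ m → depth hT x ≤ n → G m x = G n x) :
    ∃ g ∈ T.autGroup, ∀ n x, depth hT x ≤ n → g x = G n x := by
  have hdepth (n : ℕ) (x : T.V) : depth hT (G n x) = depth hT x :=
    depth_apply_of_mem_autGroup hT (hG n) x
  have hdepth_inv (n : ℕ) (x : T.V) : depth hT ((G n)⁻¹ x) = depth hT x :=
    depth_apply_of_mem_autGroup hT (inv_mem (hG n)) x
  let g : Equiv.Perm T.V :=
    { toFun x := G (depth hT x) x
      invFun x := (G (depth hT x))⁻¹ x
      left_inv x := by simp only [hdepth]; exact (G _).symm_apply_apply x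
      right_inv x := by simp only [hdepth_inv]; exact (G _).apply_symm_apply x }
  have hgG (n : ℕ) (x : T.V) (hx : depth hT x ≤ n) : g x = G n x :=
    (hstab _ n x hx le_rfl).symm
  refine ⟨g, ⟨?_, fun v w => ?_⟩, hgG⟩
  · rw [hgG 0 _ (depth_root (hT := hT)).le]
    exact (hG 0).1
  · rw [hgG (max (depth hT v) (depth hT w)) v (le_max_left ..),
      hgG (max (depth hT v) (depth hT w)) w (le_max_right ..)]
    exact (hG _).2 v w

/-- Automorphisms `σ k` supported at increasing depths can be multiplied along any subset of
`ℕ`, and different subsets give different products. -/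
lemma continuum_le_mk_autGroup (hT : T.IsTree) {D : ℕ → ℕ} (hD : StrictMono D)
    {σ : ℕ → Equiv.Perm T.V} (hσ : ∀ k, σ k ∈ T.autGroup)
    (hsupp : ∀ k x, σ k x ≠ x → D k < depth hT x) {u : ℕ → T.V} (hu : ∀ k, σ k (u k) ≠ u k)
    (hdu : ∀ k, depth hT (u k) ≤ D k + 1) : Cardinal.continuum ≤ Cardinal.mk T.autGroup := by
  classical
  have hfix (S : Set ℕ) {N M : ℕ} {x : T.V} (hNM : N ≤ M) (hx : depth hT x ≤ D N) :
      partialProd σ S M x = partialProd σ S N x :=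
    partialProd_apply_of_le σ S hNM fun n hn _ => by_contra fun h =>
      (hsupp n x h).not_ge (hx.trans (hD.monotone hn))
  choose g hg hgG using fun S => exists_mem_autGroup_eq_of_depth_le hT (partialProd σ S)
    (partialProd_mem σ S hσ) fun n m x hnm hx => hfix S hnm (hx.trans (hD.id_le n))
  have hval (S : Set ℕ) (k : ℕ) :
      g S (u k) = partialProd σ S k ((if k ∈ S then σ k else 1) (u k)) := by
    rw [hgG S _ _ (hdu k), hfix S (N := k + 1) (Nat.succ_le_succ (hD.id_le k))
      ((hdu k).trans (Nat.succ_le_of_lt (hD k.lt_succ_self))), partialProd_succ,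
      Equiv.Perm.mul_apply]
  rw [← Cardinal.mk_set_nat]
  refine Cardinal.mk_le_of_injective (f := fun S => (⟨g S, hg S⟩ : T.autGroup)) fun S S' h => ?_
  ext k
  induction k using Nat.strong_induction_on with
  | _ k ih =>
    have e := congrArg (fun g : T.autGroup => (g : Equiv.Perm T.V) (u k)) h
    simp only [hval, partialProd_congr σ ih] at e
    have e' := (partialProd σ S' k).injective e
    by_cases hk : k ∈ S <;> by_cases hk' : k ∈ S' <;>
      simp only [hk, hk', ↓reduceIte, Equiv.Perm.coe_one, id_eq, iff_true, iff_false,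
        not_true_eq_false] at e' ⊢
    exacts [hu k e', hu k e'.symm]

end RGraph

namespace GraphHom

open RGraph

variable {A B : RGraph} {p : GraphHom A B}

lemma UPLP.bijective_outMap (hp : p.UPLP) (q : A.V) : Function.Bijective (p.outMap q) := by
  refine ⟨fun e₁ e₂ h => ?_, fun e' => ?_⟩
  · have hpath : B.PathFrom (p.v q) [p.e e₁.1] := pathFrom_singleton_s18.mpr (p.outMap q e₁).2
    obtain ⟨_, _, huniq⟩ := hp q _ hpath
    have h₁ := huniq [e₁.1] ⟨pathFrom_singleton_s18.mpr e₁.2, rfl⟩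
    have h₂ := huniq [e₂.1] ⟨pathFrom_singleton_s18.mpr e₂.2, by
      simpa [outMap] using (congrArg Subtype.val h).symm⟩
    exact Subtype.ext (List.singleton_inj.mp (h₁.trans h₂.symm))
  · obtain ⟨l, ⟨hl, hlm⟩, -⟩ := hp q [e'.1] (pathFrom_singleton_s18.mpr e'.2)
    obtain ⟨e, rfl, he⟩ := List.map_eq_singleton_iff.mp hlm
    exact ⟨⟨e, pathFrom_singleton_s18.mp hl⟩, Subtype.ext he⟩

lemma uplp_of_bijective_outMap (hbij : ∀ q, Function.Bijective (p.outMap q)) : p.UPLP := by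
  intro q l'
  induction l' generalizing q with
  | nil =>
    refine fun _ => ⟨[], ⟨A.pathFrom_nil q, rfl⟩, fun l hl => List.map_eq_nil_iff.mp hl.2⟩
  | cons a m ih =>
    intro h
    obtain ⟨hsa, hm⟩ := pathFrom_cons.mp h
    obtain ⟨⟨e, hse⟩, hea⟩ := (hbij q).2 ⟨a, hsa⟩
    have hea : p.e e = a := congrArg Subtype.val hea
    obtain ⟨l, ⟨hl, hlm⟩, huniq⟩ := ih (A.t e) (by rwa [← p.t_eq, hea])
    refine ⟨e :: l, ⟨pathFrom_cons.mpr ⟨hse, hl⟩, by simp [hea, hlm]⟩, ?_⟩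
    rintro (_ | ⟨e₁, l₁⟩) ⟨hl₁, hl₁m⟩
    · simp at hl₁m
    obtain ⟨hse₁, hl₁⟩ := pathFrom_cons.mp hl₁
    obtain ⟨he₁a, hl₁m⟩ := List.cons_eq_cons.mp hl₁m
    obtain rfl : e₁ = e := congrArg Subtype.val ((hbij q).1 (a₁ := ⟨e₁, hse₁⟩) (a₂ := ⟨e, hse⟩)
      (Subtype.ext (he₁a.trans hea.symm)))
    rw [huniq l₁ ⟨hl₁, hl₁m⟩]

lemma IsIso.uplp (hp : p.IsIso) : p.UPLP := by
  refine uplp_of_bijective_outMap fun q => ⟨fun e₁ e₂ h => ?_, fun e' => ?_⟩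
  · exact Subtype.ext (hp.2.1 (congrArg Subtype.val h))
  · obtain ⟨e, he⟩ := hp.2.2 e'.1
    refine ⟨⟨e, hp.1.1 ?_⟩, Subtype.ext he⟩
    rw [← p.s_eq, he, e'.2]

end GraphHom

namespace RGraph

variable {A B : RGraph}

lemma ConeEquiv.of_uplp {p : GraphHom A B} (hp : p.UPLP) (a : A.V) : ConeEquiv A a B (p.v a) :=
  ConeEquiv.of_existsUnique_map p.e (fun _ hl => p.pathFrom_map hl) (hp a)

lemma ConeEquiv.of_v_eq {p : GraphHom A B} (hp : p.UPLP) {a a' : A.V} (h : p.v a = p.v a') :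
    ConeEquiv A a A a' :=
  (of_uplp hp a).trans (h ▸ (of_uplp hp a').symm)

lemma coneEquiv_subgraph (T : RGraph) (v : T.V) :
    ConeEquiv (T.subgraph v) (T.subgraph v).root T v := by
  have hmap (l : List (T.subgraph v).E) (x : (T.subgraph v).V) (hl : (T.subgraph v).PathFrom x l) :
      T.PathFrom x.1 (l.map Subtype.val) := by
    induction l generalizing x with
    | nil => exact T.pathFrom_nil _
    | cons e l ih =>
      obtain ⟨rfl, hl'⟩ := pathFrom_cons.mp hl
      exact pathFrom_cons.mpr ⟨rfl, ih _ hl'⟩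
  have hlift (m : List T.E) (x : (T.subgraph v).V) (hm : T.PathFrom x.1 m) :
      ∃ l, (T.subgraph v).PathFrom x l ∧ l.map Subtype.val = m := by
    induction m generalizing x with
    | nil => exact ⟨[], pathFrom_nil _ _, rfl⟩
    | cons e m ih =>
      obtain ⟨hse, hm⟩ := pathFrom_cons.mp hm
      let e' : (T.subgraph v).E := ⟨e, hse ▸ x.2⟩
      obtain ⟨l, hl, rfl⟩ := ih ((T.subgraph v).t e') hm
      exact ⟨e' :: l, pathFrom_cons.mpr ⟨Subtype.ext hse, hl⟩, rfl⟩
  refine ConeEquiv.of_existsUnique_map Subtype.val (hmap · _) fun m hm => ?_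
  obtain ⟨l, hl, hlm⟩ := hlift m (T.subgraph v).root hm
  exact ⟨l, ⟨hl, hlm⟩, fun l' hl' =>
    List.map_injective_iff.mpr Subtype.val_injective (hl'.2.trans hlm.symm)⟩

lemma ConeEquiv.of_iso_subgraph {T : RGraph} {v w : T.V}
    (h : RGraph.Iso (T.subgraph v) (T.subgraph w)) : ConeEquiv T v T w := by
  obtain ⟨h, hiso⟩ := h
  have := ConeEquiv.of_uplp hiso.uplp (T.subgraph v).root
  rw [h.root_eq] at this
  exact (coneEquiv_subgraph T v).symm.trans (this.trans (coneEquiv_subgraph T w))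

def coneSetoid (T : RGraph) : Setoid T.V where
  r v w := ConeEquiv T v T w
  iseqv := ⟨ConeEquiv.refl T, ConeEquiv.symm, ConeEquiv.trans⟩

lemma finite_quotient_coneSetoid {T : RGraph} (hcones : FinManyCones T) :
    Finite (Quotient T.coneSetoid) := by
  obtain ⟨S, hS, hrep⟩ := hcones
  have := hS.to_subtype
  refine Finite.of_surjective (fun w : S => (⟦w.1⟧ : Quotient T.coneSetoid)) fun c => ?_
  induction c using Quotient.ind with
  | _ v =>
    obtain ⟨w, hw, hvw⟩ := hrep v
    exact ⟨⟨w, hw⟩, Quotient.sound (ConeEquiv.of_iso_subgraph hvw).symm⟩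

variable (T : RGraph)

noncomputable def coneRep (x : T.V) : T.V := (⟦x⟧ : Quotient T.coneSetoid).out

lemma coneEquiv_coneRep (x : T.V) : ConeEquiv T x T (T.coneRep x) :=
  (Quotient.mk_out (s := T.coneSetoid) x).symm

lemma mk_coneRep (x : T.V) : (⟦T.coneRep x⟧ : Quotient T.coneSetoid) = ⟦x⟧ :=
  Quotient.out_eq _

lemma coneRep_coneRep (x : T.V) : T.coneRep (T.coneRep x) = T.coneRep x :=
  congrArg Quotient.out (T.mk_coneRep x)

lemma coneRep_eq_coneRep_iff {x y : T.V} :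
    T.coneRep x = T.coneRep y ↔ (⟦x⟧ : Quotient T.coneSetoid) = ⟦y⟧ :=
  ⟨fun h => by rw [← T.mk_coneRep x, h, T.mk_coneRep], congrArg Quotient.out⟩

noncomputable def repEdgeEquiv (x : T.V) :
    {e : T.E // T.s e = x} ≃ {e : T.E // T.s e = T.coneRep x} :=
  (T.coneEquiv_coneRep x).choose_spec.outEdgeEquiv

lemma coneEquiv_t_repEdgeEquiv (x : T.V) (e : {e : T.E // T.s e = x}) :
    ConeEquiv T (T.t e.1) T (T.t (T.repEdgeEquiv x e).1) :=
  ConeEquiv.of_apply_singleton (T.coneEquiv_coneRep x).choose_spec e.2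
    ((T.coneEquiv_coneRep x).choose_spec.apply_singleton e)

noncomputable def coneQuotient : RGraph where
  V := Quotient T.coneSetoid
  E := {e : T.E // T.coneRep (T.s e) = T.s e}
  s e := ⟦T.s e.1⟧
  t e := ⟦T.t e.1⟧
  root := ⟦T.root⟧

noncomputable def coneQuotientHom : GraphHom T T.coneQuotient where
  v x := ⟦x⟧
  e e := ⟨(T.repEdgeEquiv (T.s e) ⟨e, rfl⟩).1, by
    rw [(T.repEdgeEquiv (T.s e) ⟨e, rfl⟩).2, coneRep_coneRep]⟩
  root_eq := rfl
  s_eq e := by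
    change (⟦T.s (T.repEdgeEquiv (T.s e) ⟨e, rfl⟩).1⟧ : Quotient T.coneSetoid) = ⟦T.s e⟧
    rw [(T.repEdgeEquiv (T.s e) ⟨e, rfl⟩).2, mk_coneRep]
  t_eq e := Quotient.sound (T.coneEquiv_t_repEdgeEquiv (T.s e) ⟨e, rfl⟩).symm

lemma coneQuotientHom_e_of_s_eq {x : T.V} {e : T.E} (he : T.s e = x) :
    ((T.coneQuotientHom).e e).1 = (T.repEdgeEquiv x ⟨e, he⟩).1 := by
  subst he
  rfl

noncomputable def repOutEdgeEquiv (x : T.V) :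
    {e : T.E // T.s e = T.coneRep x} ≃
      {e : T.coneQuotient.E // T.coneQuotient.s e = ⟦x⟧} where
  toFun e := ⟨⟨e.1, by rw [e.2, coneRep_coneRep]⟩, by
    change (⟦T.s e.1⟧ : Quotient T.coneSetoid) = ⟦x⟧
    rw [e.2, mk_coneRep]⟩
  invFun e := ⟨e.1.1, e.1.2.symm.trans ((T.coneRep_eq_coneRep_iff).mpr e.2)⟩
  left_inv _ := rfl
  right_inv _ := rfl

lemma coneQuotientHom_isCovering : T.coneQuotientHom.IsCovering := by
  refine ⟨Quotient.mk_surjective, GraphHom.uplp_of_bijective_outMap fun x => ?_⟩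
  have : T.coneQuotientHom.outMap x = (T.repEdgeEquiv x).trans (T.repOutEdgeEquiv x) :=
    funext fun e => Subtype.ext (Subtype.ext (T.coneQuotientHom_e_of_s_eq e.2))
  rw [this]
  exact Equiv.bijective _

end RGraph

namespace GraphHom.IsCovering

open RGraph

variable {T A : RGraph} {p : GraphHom T A}

/-- The cone type of the vertices of `T` above a vertex of the covering quotient `A`. -/
noncomputable def coneClass (hp : p.IsCovering) (a : A.V) : Quotient T.coneSetoid :=
  ⟦Function.surjInv hp.1 a⟧

lemma coneClass_v (hp : p.IsCovering) (x : T.V) : hp.coneClass (p.v x) = ⟦x⟧ :=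
  Quotient.sound (ConeEquiv.of_v_eq hp.2 (Function.surjInv_eq hp.1 (p.v x)))

lemma coneClass_surjective (hp : p.IsCovering) : Function.Surjective hp.coneClass :=
  Quotient.ind fun x => ⟨p.v x, hp.coneClass_v x⟩

lemma bijective_coneClass (hp : p.IsCovering) (hmin : IsMinCovQuotient T A)
    (hcones : FinManyCones T) : Function.Bijective hp.coneClass := by
  have := finite_quotient_coneSetoid hcones
  have hle := hmin.2 _ ⟨_, T.coneQuotientHom_isCovering⟩
  have : Finite A.V := Cardinal.lt_aleph0_iff_finite.mp
    (hle.trans_lt (Cardinal.lt_aleph0_of_finite (Quotient T.coneSetoid)))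
  obtain ⟨f⟩ := Cardinal.le_def _ _ |>.mp hle
  exact hp.coneClass_surjective.bijective_of_nat_card_le
    (Nat.card_le_card_of_injective f f.injective)

end GraphHom.IsCovering

namespace RGraph

variable {T A : RGraph}

lemma isMinCovQuotient_coneQuotient (T : RGraph) : IsMinCovQuotient T T.coneQuotient :=
  ⟨⟨_, T.coneQuotientHom_isCovering⟩, fun _ ⟨_, hp⟩ =>
    Cardinal.mk_le_of_surjective hp.coneClass_surjective⟩

lemma exists_swap_of_isCovering (hT : T.IsTree) {p : GraphHom T A} (hp : p.IsCovering)
    {e₁ e₂ : A.E} (hne : e₁ ≠ e₂) (hs : A.s e₁ = A.s e₂) (ht : A.t e₁ = A.t e₂) {v : T.V}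
    (hv : p.v v = A.s e₁) : ∃ σ ∈ T.autGroup, ∃ u, σ u ≠ u ∧ depth hT u = depth hT v + 1 ∧
      ∀ x, σ x ≠ x → depth hT v < depth hT x := by
  obtain ⟨⟨f₁, hf₁⟩, hpf₁⟩ := (hp.2.bijective_outMap v).2 ⟨e₁, hv.symm⟩
  obtain ⟨⟨f₂, hf₂⟩, hpf₂⟩ := (hp.2.bijective_outMap v).2 ⟨e₂, hv ▸ hs.symm⟩
  have hpf₁ : p.e f₁ = e₁ := congrArg Subtype.val hpf₁
  have hpf₂ : p.e f₂ = e₂ := congrArg Subtype.val hpf₂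
  have hne : f₁ ≠ f₂ := fun h => hne (by rw [← hpf₁, ← hpf₂, h])
  have hce : ConeEquiv T (T.t f₁) T (T.t f₂) :=
    ConeEquiv.of_v_eq hp.2 (by rw [← p.t_eq, ← p.t_eq, hpf₁, hpf₂, ht])
  obtain ⟨σ, hσ, hσf, hsupp⟩ := exists_swap_mem_autGroup hT hne (hf₁.trans hf₂.symm) hce
  refine ⟨σ, hσ, T.t f₁, ?_, by rw [depth_t, hf₁], hf₁ ▸ hsupp⟩
  rw [hσf]
  exact fun h => hne (eq_of_t_eq hT h).symm

lemma continuum_le_mk_autGroup_of_hasRecDoubleEdge (hT : T.IsTree) (hA : IsCovQuotient T A)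
    (hrec : HasRecDoubleEdge A) : Cardinal.continuum ≤ Cardinal.mk T.autGroup := by
  obtain ⟨p, hp⟩ := hA
  obtain ⟨e₁, e₂, hne, hs, ht, hcyc⟩ := hasRecDoubleEdge_iff.mp hrec
  obtain ⟨q, L, hL, hLpath⟩ := hcyc.exists_paths
  obtain ⟨x, rfl⟩ := hp.1 q
  choose l hl hlL using fun k => (hp.2 x (L k) (hLpath k).1).exists
  have hv (k : ℕ) : p.v (T.pathTarget x (l k)) = A.s e₁ := by
    rw [← p.pathTarget_map, hlL, (hLpath k).2]
  have hdepth (k : ℕ) : depth hT (T.pathTarget x (l k)) = depth hT x + (L k).length := by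
    rw [depth, rootPath_pathTarget (hl k), List.length_append, ← hlL, List.length_map]
    rfl
  choose σ hσ u hu hdu hsupp using fun k => exists_swap_of_isCovering hT hp hne hs ht (hv k)
  refine continuum_le_mk_autGroup hT (D := fun k => depth hT (T.pathTarget x (l k))) ?_ hσ
    hsupp hu fun k => (hdu k).le
  intro j k hjk
  simp only [hdepth]
  exact Nat.add_lt_add_left (hL hjk) _

lemma hasRecDoubleEdge_of_isMinCovQuotient (hT : T.IsTree) (hLF : T.LocallyFinite)
    (hcones : FinManyCones T) (htwin : {v | T.HasTwinChildren v}.Infinite)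
    (hmin : IsMinCovQuotient T A) : HasRecDoubleEdge A := by
  obtain ⟨p, hp⟩ := hmin.1
  have hψ := hp.bijective_coneClass hmin hcones
  have := finite_quotient_coneSetoid hcones
  have : Finite A.V := Finite.of_injective _ hψ.1
  obtain ⟨v, ⟨f₁, f₂, hne, hf₁, hf₂, hce⟩, hdeep⟩ :=
    exists_mem_le_depth_of_infinite hT hLF htwin (Nat.card A.V)
  have hpne : p.e f₁ ≠ p.e f₂ := fun h => hne <| congrArg Subtype.val <|
    (hp.2.bijective_outMap v).1 (a₁ := ⟨f₁, hf₁⟩) (a₂ := ⟨f₂, hf₂⟩) (Subtype.ext h)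
  have hpt : p.v (T.t f₁) = p.v (T.t f₂) :=
    hψ.1 (by rw [hp.coneClass_v, hp.coneClass_v]; exact Quotient.sound hce)
  refine hasRecDoubleEdge_iff.mpr ⟨p.e f₁, p.e f₂, hpne, by rw [p.s_eq, p.s_eq, hf₁, hf₂],
    by rw [p.t_eq, p.t_eq, hpt], ?_⟩
  have hcyc := reachableFromCycle_of_card_le_length (p.pathFrom_map (rootPath hT v).2)
    (by rw [List.length_map]; exact hdeep)
  rwa [p.pathTarget_map, pathTarget_rootPath, ← hf₁, ← p.s_eq] at hcyc

lemma mk_autGroup_le_continuum (hT : T.IsTree) (hLF : T.LocallyFinite) :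
    Cardinal.mk T.autGroup ≤ Cardinal.continuum := by
  have := countable_V hT hLF
  calc Cardinal.mk T.autGroup ≤ Cardinal.mk (T.V → T.V) :=
        Cardinal.mk_le_of_injective (f := fun g : T.autGroup => ⇑(g : Equiv.Perm T.V))
          fun g h hgh => Subtype.ext (Equiv.coe_fn_injective hgh)
    _ = Cardinal.mk T.V ^ Cardinal.mk T.V := (Cardinal.power_def _ _).symm
    _ ≤ Cardinal.aleph0 ^ Cardinal.aleph0 :=
        (Cardinal.power_le_power_right Cardinal.mk_le_aleph0).trans
          (Cardinal.power_le_power_left Cardinal.aleph0_ne_zero Cardinal.mk_le_aleph0)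
    _ = Cardinal.continuum := Cardinal.aleph0_power_aleph0

end RGraph

/-- Size of the automorphism group. For a self-similar tree `T` the
following are equivalent: (i) some covering quotient of `T` has a recurrent double
edge; (ii) every minimal covering quotient of `T` has a recurrent double edge;
(iii) `Aut(T)` is infinite; (iv) `Aut(T)` is uncountable. Consequently, `Aut(T)` is
either finite or of cardinality the continuum. -/
theorem stmt18 (T : RGraph) (hT : SelfSimilarTree T) :
    ((∃ A : RGraph, IsCovQuotient T A ∧ HasRecDoubleEdge A) ↔
      (∀ Abar : RGraph, IsMinCovQuotient T Abar → HasRecDoubleEdge Abar)) ∧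
    ((∀ Abar : RGraph, IsMinCovQuotient T Abar → HasRecDoubleEdge Abar) ↔
      Infinite ↥T.autGroup) ∧
    (Infinite ↥T.autGroup ↔ ¬ Countable ↥T.autGroup) ∧
    (Finite ↥T.autGroup ∨ Cardinal.mk ↥T.autGroup = Cardinal.continuum) := by
  obtain ⟨hT, hLF, hcones⟩ := hT
  have tfae : [∃ A : RGraph, IsCovQuotient T A ∧ HasRecDoubleEdge A,
      ∀ Abar : RGraph, IsMinCovQuotient T Abar → HasRecDoubleEdge Abar,
      Infinite T.autGroup, ¬ Countable T.autGroup,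
      Cardinal.continuum ≤ Cardinal.mk T.autGroup].TFAE := by
    tfae_have 1 → 5 := fun ⟨_, hA, hrec⟩ =>
      RGraph.continuum_le_mk_autGroup_of_hasRecDoubleEdge hT hA hrec
    tfae_have 5 → 4 := fun h hc =>
      (Cardinal.aleph0_lt_continuum.trans_le h).not_ge Cardinal.mk_le_aleph0
    tfae_have 4 → 3 := fun h => not_finite_iff_infinite.mp fun hfin => h Finite.to_countable
    tfae_have 3 → 2 := fun h _ => RGraph.hasRecDoubleEdge_of_isMinCovQuotient hT hLF hcones
      (fun hfin => not_finite_iff_infinite.mpr h (RGraph.finite_autGroup hT hLF hfin))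
    tfae_have 2 → 1 := fun h => ⟨_, (RGraph.isMinCovQuotient_coneQuotient T).1,
      h _ (RGraph.isMinCovQuotient_coneQuotient T)⟩
    tfae_finish
  refine ⟨tfae.out 0 1, tfae.out 1 2, tfae.out 2 3, (finite_or_infinite _).imp_right fun h =>
    (RGraph.mk_autGroup_le_continuum hT hLF).antisymm ((tfae.out 2 4).mp h)⟩
end
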